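/- arXiv:math/0407131 — 2 statements merged into one kernel-verified Lean document; each statement's English description precedes it below -/
import Mathlib

section
/- The n-th moment of a Poisson random variable with parameter x is given by the sum over compositions: E[X^n] = Σ_{k=1}^{n} (n!/k!) Σ_{(α₁,...,α_k) ∈ ℕ^k, Σα_i = n} Π_{j=1}^{k} x/α_j! (each α_j ≥ 1). -/
/-!
Comparing coefficients of `t ^ n` in `exp (m t) = (1 + (exp t - 1)) ^ m` gives
`m ^ n = n! * ∑ₖ (m choose k) * [tⁿ] (exp t - 1) ^ k`, and `[tⁿ] (exp t - 1) ^ k` is exactly the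
composition sum `∑_{α ∈ Λₙᵏ} ∏ⱼ 1 / αⱼ!`. Averaging against the Poisson weights with
`E[X choose k] = x ^ k / k!` gives the formula; the term `k = 0` vanishes because `n ≥ 1`.
-/

open ProbabilityTheory Real Finset
open scoped Nat

theorem Finset.Nat.sum_antidiagonalTuple_succ {M : Type*} [AddCommMonoid M] (k n : ℕ)
    (f : (Fin (k + 1) → ℕ) → M) :
    ∑ α ∈ Nat.antidiagonalTuple (k + 1) n, f α =
      ∑ p ∈ antidiagonal n, ∑ β ∈ Nat.antidiagonalTuple k p.2, f (Fin.cons p.1 β) := by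
  rw [sum_sigma']
  refine sum_nbij' (fun α => ⟨(α 0, ∑ j, Fin.tail α j), Fin.tail α⟩) (fun q => Fin.cons q.1.1 q.2)
    (fun α hα => ?_) (fun q hq => ?_) (fun α _ => Fin.cons_self_tail α) (fun q hq => ?_)
    (fun α _ => by rw [Fin.cons_self_tail])
  all_goals simp_all [Nat.mem_antidiagonalTuple, Fin.sum_univ_succ, Fin.tail]

namespace PoissonMoment

/-- The coefficient of `t ^ a` in `exp t - 1`. -/
noncomputable def expSubOneCoeff (a : ℕ) : ℝ := if a = 0 then 0 else (a ! : ℝ)⁻¹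

/-- The coefficient of `t ^ n` in `(exp t - 1) ^ k`. -/
noncomputable def expSubOnePowCoeff (k n : ℕ) : ℝ :=
  ∑ α ∈ Nat.antidiagonalTuple k n, ∏ j, expSubOneCoeff (α j)

lemma expSubOnePowCoeff_zero_succ (n : ℕ) : expSubOnePowCoeff 0 (n + 1) = 0 := by
  simp [expSubOnePowCoeff]

lemma expSubOnePowCoeff_succ (k n : ℕ) :
    expSubOnePowCoeff (k + 1) n =
      ∑ p ∈ antidiagonal n, expSubOneCoeff p.1 * expSubOnePowCoeff k p.2 := by
  simp only [expSubOnePowCoeff, Finset.Nat.sum_antidiagonalTuple_succ, mul_sum,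
    Fin.prod_univ_succ, Fin.cons_zero, Fin.cons_succ]

lemma add_pow_div_factorial {K : Type*} [Field K] [CharZero K] (x y : K) (n : ℕ) :
    (x + y) ^ n / n ! = ∑ p ∈ antidiagonal n, x ^ p.1 / p.1 ! * (y ^ p.2 / p.2 !) := by
  rw [(Commute.all x y).add_pow', sum_div]
  refine sum_congr rfl fun p hp => ?_
  rw [HasAntidiagonal.mem_antidiagonal] at hp
  subst hp
  have hfac : ((p.1 + p.2)! : K) ≠ 0 := Nat.cast_ne_zero.2 (Nat.factorial_ne_zero _)
  rw [nsmul_eq_mul, Nat.cast_add_choose]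
  field_simp

/-- Coefficients of `t ^ n` in `exp (m t) = (1 + (exp t - 1)) ^ m`, by induction on `m` through
`exp ((m + 1) t) = exp t * exp (m t)`. -/
lemma pow_div_factorial_eq_sum_choose_mul_expSubOnePowCoeff (m n N : ℕ) (hN : n < N) :
    (m : ℝ) ^ n / n ! = ∑ k ∈ range N, (m.choose k : ℝ) * expSubOnePowCoeff k n := by
  induction m generalizing n N with
  | zero =>
    rw [sum_eq_single_of_mem 0 (mem_range.2 (by omega))
      fun k _ hk => by simp [Nat.choose_eq_zero_of_lt (Nat.pos_of_ne_zero hk)]]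
    cases n <;> simp [expSubOnePowCoeff]
  | succ m ih =>
    obtain ⟨N, rfl⟩ : ∃ N', N = N' + 1 := ⟨N - 1, by omega⟩
    have hshift : ∑ k ∈ range N, (m.choose k : ℝ) * expSubOnePowCoeff (k + 1) n =
        ∑ p ∈ antidiagonal n, expSubOneCoeff p.1 * ((m : ℝ) ^ p.2 / p.2 !) := by
      simp_rw [expSubOnePowCoeff_succ, mul_sum]
      rw [sum_comm]
      refine sum_congr rfl fun p hp => ?_
      rw [HasAntidiagonal.mem_antidiagonal] at hp
      rcases Nat.eq_zero_or_pos p.1 with h0 | hpos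
      · simp [expSubOneCoeff, h0]
      · rw [ih p.2 N (by omega), mul_sum]
        exact sum_congr rfl fun k _ => by ring
    calc ((m + 1 : ℕ) : ℝ) ^ n / n !
        = ∑ p ∈ antidiagonal n, (1 : ℝ) ^ p.1 / p.1 ! * ((m : ℝ) ^ p.2 / p.2 !) := by
          rw [← add_pow_div_factorial]; push_cast; ring_nf
      _ = (m : ℝ) ^ n / n ! +
            ∑ p ∈ antidiagonal n, expSubOneCoeff p.1 * ((m : ℝ) ^ p.2 / p.2 !) := by
          rw [Nat.sum_antidiagonal_eq_sum_range_succ (fun a b => (1 : ℝ) ^ a / a ! * (m ^ b / b !)),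
            Nat.sum_antidiagonal_eq_sum_range_succ (fun a b => expSubOneCoeff a * (m ^ b / b !)),
            sum_range_succ', sum_range_succ']
          simp only [one_pow, one_div, expSubOneCoeff, Nat.add_one_ne_zero, ↓reduceIte,
            Nat.factorial_zero, Nat.cast_one, inv_one, zero_mul, add_zero, Nat.sub_zero]
          ring
      _ = ∑ k ∈ range (N + 1), (m.choose k : ℝ) * expSubOnePowCoeff k n +
            ∑ k ∈ range N, (m.choose k : ℝ) * expSubOnePowCoeff (k + 1) n := by
          rw [hshift, ih n (N + 1) hN]
      _ = ∑ k ∈ range (N + 1), ((m + 1).choose k : ℝ) * expSubOnePowCoeff k n := by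
          rw [sum_range_succ' _ N, sum_range_succ' (fun k => ((m + 1).choose k : ℝ) * _) N]
          simp only [Nat.choose_succ_succ', Nat.cast_add, add_mul, sum_add_distrib,
            Nat.choose_zero_right]
          ring

lemma hasSum_choose_mul_exp_neg_mul_pow_div_factorial (x : ℝ) (k : ℕ) :
    HasSum (fun m : ℕ => (m.choose k : ℝ) * (exp (-x) * x ^ m / m !)) (x ^ k / k !) := by
  rw [← hasSum_nat_add_iff' k]
  have hlow : ∑ i ∈ range k, (i.choose k : ℝ) * (exp (-x) * x ^ i / i !) = 0 :=
    sum_eq_zero fun i hi => by simp [Nat.choose_eq_zero_of_lt (mem_range.1 hi)]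
  have hval : exp (-x) * x ^ k / k ! * exp x = x ^ k / k ! := by
    rw [mul_comm, ← mul_div_assoc, ← mul_assoc, ← exp_add, add_neg_cancel, exp_zero, one_mul]
  rw [hlow, sub_zero, ← hval, exp_eq_exp_ℝ]
  refine ((NormedSpace.expSeries_div_hasSum_exp x).mul_left _).congr_fun fun m => ?_
  rw [Nat.add_comm m k, Nat.cast_add_choose, pow_add]
  field_simp

lemma hasSum_pow_mul_exp_neg_mul_pow_div_factorial (x : ℝ) (n : ℕ) :
    HasSum (fun m : ℕ => (m : ℝ) ^ n * (exp (-x) * x ^ m / m !))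
      (n ! * ∑ k ∈ range (n + 1), expSubOnePowCoeff k n * (x ^ k / k !)) := by
  have hterm : ∀ m : ℕ, (m : ℝ) ^ n * (exp (-x) * x ^ m / m !) = ∑ k ∈ range (n + 1),
      n ! * (expSubOnePowCoeff k n * ((m.choose k : ℝ) * (exp (-x) * x ^ m / m !))) := by
    intro m
    rw [← div_mul_cancel₀ ((m : ℝ) ^ n) (Nat.cast_ne_zero.2 n.factorial_ne_zero),
      pow_div_factorial_eq_sum_choose_mul_expSubOnePowCoeff m n (n + 1) n.lt_succ_self,
      sum_mul, sum_mul]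
    exact sum_congr rfl fun k _ => by ring
  simp_rw [hterm, mul_sum]
  exact hasSum_sum fun k _ =>
    ((hasSum_choose_mul_exp_neg_mul_pow_div_factorial x k).mul_left _).mul_left _

lemma sum_filter_prod_div_factorial (y : ℝ) (k n : ℕ) :
    ∑ α ∈ (Nat.antidiagonalTuple k n).filter (fun α => ∀ j, 1 ≤ α j),
      ∏ j : Fin k, y / ((α j)! : ℝ) = y ^ k * expSubOnePowCoeff k n := by
  rw [sum_filter, expSubOnePowCoeff, mul_sum]
  refine sum_congr rfl fun α _ => ?_
  have hprod : y ^ k * ∏ j, expSubOneCoeff (α j) =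
      ∏ j, if 1 ≤ α j then y / ((α j)! : ℝ) else 0 := by
    rw [← Fin.prod_const, ← prod_mul_distrib]
    refine prod_congr rfl fun j _ => ?_
    by_cases h : 1 ≤ α j
    · simp [expSubOneCoeff, h, Nat.one_le_iff_ne_zero.1 h, div_eq_mul_inv]
    · simp [expSubOneCoeff, Nat.lt_one_iff.1 (not_le.1 h)]
  rw [hprod, Fintype.prod_ite_zero]
  split_ifs <;> rfl

end PoissonMoment

theorem poisson_moment_formula_general (x : NNReal) (n : ℕ) (hn : 1 ≤ n) :
    (∑' k : ℕ, (k : ℝ) ^ n * poissonPMFReal x k) =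
      ∑ k ∈ Finset.Icc 1 n, ((n.factorial : ℝ) / (k.factorial : ℝ)) *
        ∑ α ∈ (Finset.Nat.antidiagonalTuple k n).filter (fun α => ∀ j, 1 ≤ α j),
          ∏ j : Fin k, (x : ℝ) / ((α j).factorial : ℝ) := by
  obtain ⟨n, rfl⟩ := Nat.exists_eq_add_of_le' hn
  simp only [poissonPMFReal]
  rw [(PoissonMoment.hasSum_pow_mul_exp_neg_mul_pow_div_factorial x (n + 1)).tsum_eq,
    Nat.range_succ_eq_Icc_zero, ← insert_Icc_add_one_left_eq_Icc (Nat.zero_le _),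
    sum_insert (by simp), PoissonMoment.expSubOnePowCoeff_zero_succ, zero_mul, zero_add, mul_sum]
  refine sum_congr rfl fun k _ => ?_
  rw [PoissonMoment.sum_filter_prod_div_factorial]
  ring

/-- Combinatorial formula for Poisson moments: for `X ~ Poisson(x)` and `n ≥ 1`,
`E[Xⁿ] = Σ_{k=1}^n (n!/k!) Σ_{α ∈ Λₙᵏ} Π_{j=1}^k x/αⱼ!`, where
`Λₙᵏ = {(α₁,…,α_k) ∈ (ℕ≥1)^k : α₁+⋯+α_k = n}`. -/
theorem poisson_moment_formula (x : NNReal) (hx : 0 < x) (n : ℕ) (hn : 1 ≤ n) :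
    (∑' k : ℕ, (k : ℝ) ^ n * poissonPMFReal x k) =
      ∑ k ∈ Finset.Icc 1 n, ((n.factorial : ℝ) / (k.factorial : ℝ)) *
        ∑ α ∈ (Finset.Nat.antidiagonalTuple k n).filter (fun α => ∀ j, 1 ≤ α j),
          ∏ j : Fin k, (x : ℝ) / ((α j).factorial : ℝ) :=
  poisson_moment_formula_general x n hn
end

section
/- For multi-indices α ∈ 𝒥 (finitely supported sequences of nonnegative integers) define (2ℕ)^{qα} = Π_j (2j)^{q α_j}. Then the series Σ_{α ∈ 𝒥, α ≠ 0} (2ℕ)^{-qα} converges if and only if q > 1. -/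
open Finset Real

private noncomputable def bfun (q : ℝ) (j : ℕ) : ℝ := (2 * ((j : ℕ) + 1) : ℝ) ^ (-q)

private lemma base_pos (j : ℕ) : (0 : ℝ) < 2 * ((j : ℕ) + 1) := by positivity

private lemma bfun_pos (q : ℝ) (j : ℕ) : 0 < bfun q j :=
  Real.rpow_pos_of_pos (base_pos j) _

private lemma bfun_le_half {q : ℝ} (hq : 1 < q) (j : ℕ) : bfun q j ≤ 1 / 2 := by
  have h1 : (1 : ℝ) ≤ 2 * ((j : ℕ) + 1) := by
    have : (0:ℝ) ≤ (j : ℝ) := Nat.cast_nonneg j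
    nlinarith
  have h2 : bfun q j ≤ (2 * ((j : ℕ) + 1) : ℝ) ^ (-1 : ℝ) := by
    apply Real.rpow_le_rpow_of_exponent_le h1
    linarith
  have h3 : (2 * ((j : ℕ) + 1) : ℝ) ^ (-1 : ℝ) = (2 * ((j : ℕ) + 1) : ℝ)⁻¹ := by
    rw [Real.rpow_neg_one]
  rw [h3] at h2
  have h4 : (2 * ((j : ℕ) + 1) : ℝ)⁻¹ ≤ 1 / 2 := by
    rw [inv_le_iff_one_le_mul₀ (base_pos j)]
    have : (0:ℝ) ≤ (j : ℝ) := Nat.cast_nonneg j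
    nlinarith
  linarith

private lemma bfun_summable {q : ℝ} (hq : 1 < q) : Summable (bfun q) := by
  have h : ∀ j : ℕ, bfun q j = (2 : ℝ) ^ (-q) * ((j : ℝ) + 1) ^ (-q) := by
    intro j
    unfold bfun
    rw [Real.mul_rpow (by norm_num) (by positivity)]
  have hsum : Summable fun j : ℕ => ((j : ℝ) + 1) ^ (-q) := by
    have := (Real.summable_nat_rpow (p := -q)).2 (by linarith)
    have h2 := (summable_nat_add_iff (f := fun n : ℕ => (n : ℝ) ^ (-q)) 1).2 this
    refine h2.congr fun n => ?_
    push_cast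
    ring_nf
  refine (hsum.mul_left _).congr fun j => (h j).symm

/-- partial geometric sums bounded by `exp (2 b)`. -/
private lemma geom_le_exp {b : ℝ} (hb0 : 0 < b) (hb : b ≤ 1 / 2) (n : ℕ) :
    ∑ k ∈ range n, b ^ k ≤ Real.exp (2 * b) := by
  have hb1 : b < 1 := by linarith
  have h1 : (∑ k ∈ range n, b ^ k) * (1 - b) = 1 - b ^ n := by
    have := geom_sum_mul b n
    nlinarith [this]
  have hbn : 0 ≤ b ^ n := by positivity
  have h2 : (∑ k ∈ range n, b ^ k) ≤ 1 / (1 - b) := by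
    rw [le_div_iff₀ (by linarith)]
    nlinarith
  have h3 : 1 / (1 - b) ≤ 1 + 2 * b := by
    rw [div_le_iff₀ (by linarith)]
    nlinarith
  have h4 : 1 + 2 * b ≤ Real.exp (2 * b) := by
    have := Real.add_one_le_exp (2 * b)
    linarith
  linarith

set_option maxHeartbeats 1000000 in
/-- For finitely supported multi-indices `α ∈ 𝒥 = (ℕ₀^ℕ)_c` (with coordinates indexed by
`j = 1, 2, …`, here `j+1` for `j : ℕ`), the series `Σ_{α ≠ 0} (2ℕ)^{-qα}` with
`(2ℕ)^{-qα} = Π_j (2j)^{-q·α_j}` converges if and only if `q > 1`. -/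
theorem summable_two_nat_pow_iff (q : ℝ) :
    Summable (fun α : {α : ℕ →₀ ℕ // α ≠ 0} =>
      ∏ j ∈ (α : ℕ →₀ ℕ).support,
        ((2 * ((j : ℕ) + 1) : ℝ)) ^ (-(q * ((α : ℕ →₀ ℕ) j : ℝ)))) ↔ 1 < q := by
  classical
  constructor
  · -- summable → 1 < q
    intro hsum
    by_contra hq
    push_neg at hq
    -- restrict to single j 1
    have hinj : Function.Injective
        (fun j : ℕ => (⟨Finsupp.single j 1, by simp [Finsupp.single_eq_zero]⟩ :
          {α : ℕ →₀ ℕ // α ≠ 0})) := by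
      intro a b hab
      have := congrArg Subtype.val hab
      exact Finsupp.single_left_injective one_ne_zero this
    have h2 := hsum.comp_injective hinj
    have h3 : Summable (bfun q) := by
      refine h2.congr fun j => ?_
      simp only [Function.comp]
      rw [Finsupp.support_single_ne_zero _ one_ne_zero]
      simp [bfun]
    -- but bfun q j ≥ bfun 1 j ≥ ... not summable for q ≤ 1
    have hnot : ¬ Summable (bfun q) := by
      have h : ∀ j : ℕ, bfun q j = (2 : ℝ) ^ (-q) * ((j : ℝ) + 1) ^ (-q) := by
        intro j
        unfold bfun
        rw [Real.mul_rpow (by norm_num) (by positivity)]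
      intro hs
      have hs2 : Summable fun j : ℕ => ((j : ℝ) + 1) ^ (-q) := by
        have := (summable_mul_left_iff
          (f := fun j : ℕ => ((j : ℝ) + 1) ^ (-q))
          (a := (2 : ℝ) ^ (-q)) (by positivity)).1 (hs.congr h)
        exact this
      have hs3 : Summable fun n : ℕ => ((n : ℝ)) ^ (-q) := by
        rw [← summable_nat_add_iff 1]
        refine hs2.congr fun n => ?_
        push_cast
        ring_nf
      have := (Real.summable_nat_rpow).1 hs3
      linarith
    exact hnot h3
  · -- 1 < q → summable
    intro hq
    set g : (ℕ →₀ ℕ) → ℝ := fun α =>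
      ∏ j ∈ α.support, ((2 * ((j : ℕ) + 1) : ℝ)) ^ (-(q * (α j : ℝ))) with hg
    have hgnn : ∀ α, 0 ≤ g α := fun α =>
      Finset.prod_nonneg fun j _ => (Real.rpow_pos_of_pos (base_pos j) _).le
    have hfact : ∀ (j : ℕ) (k : ℕ),
        ((2 * ((j : ℕ) + 1) : ℝ)) ^ (-(q * (k : ℝ))) = (bfun q j) ^ k := by
      intro j k
      unfold bfun
      rw [show (-(q * (k : ℝ))) = (-q) * (k : ℝ) by ring,
        Real.rpow_mul (base_pos j).le, Real.rpow_natCast]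
    have hB : Summable (bfun q) := bfun_summable hq
    have key : Summable g := by
      apply summable_of_sum_le hgnn (c := Real.exp (2 * ∑' j, bfun q j))
      intro S
      set N : ℕ := S.sup fun α => α.support.sup id + 1 with hN
      set M : ℕ := S.sup fun α => α.support.sup α with hM
      have hsupp : ∀ α ∈ S, α.support ⊆ Finset.range N := by
        intro α hα j hj
        have h1 : j ≤ α.support.sup id := Finset.le_sup (f := id) hj
        have h2 : α.support.sup id + 1 ≤ N := Finset.le_sup (f := fun α => α.support.sup id + 1) hα
        simp only [Finset.mem_range]
        omega
      have hval : ∀ α ∈ S, ∀ j, α j ≤ M := by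
        intro α hα j
        by_cases hj : j ∈ α.support
        · exact le_trans (Finset.le_sup (f := α) hj)
            (Finset.le_sup (f := fun α => α.support.sup α) hα)
        · simp [Finsupp.notMem_support_iff.1 hj]
      have hgN : ∀ α ∈ S, g α = ∏ j ∈ Finset.range N, (bfun q j) ^ (α j) := by
        intro α hα
        show (∏ j ∈ α.support, ((2 * ((j : ℕ) + 1) : ℝ)) ^ (-(q * (α j : ℝ)))) = _
        rw [Finset.prod_subset (hsupp α hα)]
        · exact Finset.prod_congr rfl fun j _ => hfact j (α j)
        · intro j _ hj
          rw [Finsupp.notMem_support_iff.1 hj]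
          simp
      -- inject into pi
      set e : (ℕ →₀ ℕ) → (∀ j ∈ Finset.range N, ℕ) := fun α j _ => α j with he
      have hinj : Set.InjOn e S := by
        intro α hα β hβ hab
        ext j
        by_cases hj : j ∈ Finset.range N
        · exact congrFun (congrFun hab j) hj
        · have h1 : α j = 0 := by
            by_contra h
            exact hj (hsupp α hα (Finsupp.mem_support_iff.2 h))
          have h2 : β j = 0 := by
            by_contra h
            exact hj (hsupp β hβ (Finsupp.mem_support_iff.2 h))
          rw [h1, h2]
      set F : (∀ j ∈ Finset.range N, ℕ) → ℝ :=
        fun p => ∏ x ∈ (Finset.range N).attach, (bfun q x.1) ^ (p x.1 x.2) with hF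
      have hstep1 : ∑ α ∈ S, g α = ∑ p ∈ S.image e, F p := by
        rw [Finset.sum_image fun a ha b hb h => hinj ha hb h]
        refine Finset.sum_congr rfl fun α hα => ?_
        rw [hgN α hα, hF]
        exact (Finset.prod_attach _ fun j => (bfun q j) ^ (α j)).symm
      have hsub : S.image e ⊆ (Finset.range N).pi fun _ => Finset.range (M + 1) := by
        intro p hp
        rw [Finset.mem_image] at hp
        obtain ⟨α, hα, rfl⟩ := hp
        rw [Finset.mem_pi]
        intro j hj
        rw [Finset.mem_range]
        exact Nat.lt_succ_of_le (hval α hα j)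
      have hstep2 : ∑ p ∈ S.image e, F p ≤
          ∑ p ∈ (Finset.range N).pi fun _ => Finset.range (M + 1), F p := by
        refine Finset.sum_le_sum_of_subset_of_nonneg hsub fun p _ _ => ?_
        exact Finset.prod_nonneg fun x _ => pow_nonneg (bfun_pos q x.1).le _
      have hstep3 : ∑ p ∈ (Finset.range N).pi fun _ => Finset.range (M + 1), F p =
          ∏ j ∈ Finset.range N, ∑ k ∈ Finset.range (M + 1), (bfun q j) ^ k := by
        simp only [hF]
        exact (Finset.prod_sum _ _ fun j k => (bfun q j) ^ k).symm
      have hstep4 : ∏ j ∈ Finset.range N, ∑ k ∈ Finset.range (M + 1), (bfun q j) ^ k ≤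
          ∏ j ∈ Finset.range N, Real.exp (2 * bfun q j) := by
        refine Finset.prod_le_prod (fun j _ => ?_) (fun j _ => ?_)
        · exact Finset.sum_nonneg fun k _ => pow_nonneg (bfun_pos q j).le _
        · exact geom_le_exp (bfun_pos q j) (bfun_le_half hq j) _
      have hstep5 : ∏ j ∈ Finset.range N, Real.exp (2 * bfun q j) ≤
          Real.exp (2 * ∑' j, bfun q j) := by
        rw [← Real.exp_sum]
        apply Real.exp_le_exp.2
        rw [← Finset.mul_sum]
        have := Summable.sum_le_tsum (Finset.range N) (fun j _ => (bfun_pos q j).le) hB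
        linarith
      calc ∑ α ∈ S, g α = ∑ p ∈ S.image e, F p := hstep1
        _ ≤ _ := hstep2
        _ = _ := hstep3
        _ ≤ _ := hstep4
        _ ≤ _ := hstep5
    exact key.comp_injective Subtype.val_injective
end
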